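/- arXiv:1910.09691 — 4 statements merged into one kernel-verified Lean document; each statement's English description precedes it below -/
import Mathlib

section
/- For every complex number s with 0 < Re(s) < 1, one has ∫₀^{π/2} (sin θ)^{−s} dθ = (π/2)/(1−s) + (s/(1−s)) · ∫₀^{π/2} θ^{1−s} · (sin θ/θ)^{−s−1} · (d/dθ)(sin θ/θ) dθ, where both integrals converge absolutely and complex powers of the positive reals sin θ, θ, and sin θ/θ are taken with the real branch of the logarithm. -/
/-!
With `q θ = sin θ / θ` one has `(sin θ)^(-s) = θ^(-s) q(θ)^(-s)`, so
`F θ = θ^(1-s) / (1-s) * q(θ)^(-s)` satisfies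
`F' = (sin θ)^(-s) - s/(1-s) * θ^(1-s) q^(-s-1) q'` on `(0, π)`.
Jordan's inequality `q ≥ 2/π` on `(0, π/2]` and `|q'(θ)| ≤ 2/θ` bound both integrands by
a multiple of `θ^(-Re s)`, integrable since `Re s < 1`, and `‖F θ‖` by a multiple of
`θ^(1 - Re s)`, so `F(0+) = 0`; and `F(π/2) = (π/2)/(1-s)`.
-/

open MeasureTheory Complex Real

noncomputable section

open Set Filter Topology

namespace SinCpowIBP

lemma integrableOn_Ioo_of_norm_le_rpow {E : Type*} [NormedAddCommGroup E] {f : ℝ → E}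
    {b C r : ℝ} (hb : 0 < b) (hr : -1 < r) (hf : ContinuousOn f (Ioo 0 b))
    (hle : ∀ θ ∈ Ioo 0 b, ‖f θ‖ ≤ C * θ ^ r) : IntegrableOn f (Ioo 0 b) :=
  Integrable.mono'
    (((intervalIntegral.integrableOn_Ioo_rpow_iff hb).2 hr).const_mul C)
    (hf.aestronglyMeasurable measurableSet_Ioo)
    ((ae_restrict_mem measurableSet_Ioo).mono hle)

lemma norm_ofReal_cpow_le_of_le {m q : ℝ} {c : ℂ} (hm : 0 < m) (hmq : m ≤ q)
    (hc : c.re ≤ 0) :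
    ‖((q : ℝ) : ℂ) ^ c‖ ≤ m ^ c.re := by
  rw [norm_cpow_eq_rpow_re_of_pos (hm.trans_le hmq)]
  exact Real.rpow_le_rpow_of_nonpos hm hmq hc

lemma two_div_pi_le_sin_div {θ : ℝ} (h0 : 0 < θ) (hθ : θ ≤ π / 2) :
    2 / π ≤ Real.sin θ / θ :=
  (le_div_iff₀ h0).2 (Real.mul_le_sin h0.le hθ)

lemma hasDerivAt_sin_div {θ : ℝ} (hθ : θ ≠ 0) :
    HasDerivAt (fun u : ℝ => Real.sin u / u) ((Real.cos θ * θ - Real.sin θ) / θ ^ 2) θ := by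
  simpa using (Real.hasDerivAt_sin θ).fun_div (hasDerivAt_id' θ) hθ

lemma abs_deriv_sin_div_le {θ : ℝ} (hθ : 0 < θ) :
    |deriv (fun u : ℝ => Real.sin u / u) θ| ≤ 2 / θ := by
  have hnum : |Real.cos θ * θ - Real.sin θ| ≤ 2 * θ :=
    calc |Real.cos θ * θ - Real.sin θ| ≤ |Real.cos θ| * |θ| + |Real.sin θ| := by
          rw [← abs_mul]; exact abs_sub _ _
      _ ≤ 1 * θ + θ := by
          rw [abs_of_pos hθ]
          gcongr
          · exact Real.abs_cos_le_one θ
          · simpa [abs_of_pos hθ] using Real.abs_sin_le_abs (x := θ)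
      _ = 2 * θ := by ring
  rw [(hasDerivAt_sin_div hθ.ne').deriv, abs_div, abs_of_pos (by positivity : 0 < θ ^ 2),
    div_le_div_iff₀ (by positivity) hθ]
  nlinarith

lemma continuousOn_sin_cpow (c : ℂ) :
    ContinuousOn (fun θ : ℝ => ((Real.sin θ : ℝ) : ℂ) ^ c) (Ioo 0 π) := fun _ hθ =>
  ((continuousAt_ofReal_cpow_const _ c (Or.inr (Real.sin_pos_of_pos_of_lt_pi hθ.1 hθ.2).ne')).comp
    Real.continuous_sin.continuousAt).continuousWithinAt

lemma sin_div_pos {θ : ℝ} (hθ : θ ∈ Ioo 0 π) : 0 < Real.sin θ / θ :=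
  div_pos (Real.sin_pos_of_pos_of_lt_pi hθ.1 hθ.2) hθ.1

lemma continuousAt_sin_div_cpow {θ : ℝ} (hθ : θ ∈ Ioo 0 π) (c : ℂ) :
    ContinuousAt (fun t : ℝ => ((Real.sin t / t : ℝ) : ℂ) ^ c) θ :=
  (continuousAt_ofReal_cpow_const _ c (Or.inr (sin_div_pos hθ).ne')).comp
    (f := fun t : ℝ => Real.sin t / t)
    (Real.continuous_sin.continuousAt.div continuousAt_id hθ.1.ne')

lemma ofReal_sin_cpow_eq {θ : ℝ} (hθ : θ ∈ Ioo 0 π) (c : ℂ) :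
    ((Real.sin θ : ℝ) : ℂ) ^ c = (θ : ℂ) ^ c * ((Real.sin θ / θ : ℝ) : ℂ) ^ c := by
  rw [← mul_cpow_ofReal_nonneg hθ.1.le (sin_div_pos hθ).le, ← ofReal_mul,
    mul_div_cancel₀ _ hθ.1.ne']

variable {s : ℂ}

lemma norm_sin_cpow_le (hs : 0 ≤ s.re) {θ : ℝ} (hθ : θ ∈ Ioo 0 (π / 2)) :
    ‖((Real.sin θ : ℝ) : ℂ) ^ (-s)‖ ≤ (2 / π) ^ (-s.re) * θ ^ (-s.re) := by
  have hθπ : θ ∈ Ioo 0 π := ⟨hθ.1, hθ.2.trans (by linarith [pi_pos])⟩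
  rw [ofReal_sin_cpow_eq hθπ, norm_mul, norm_cpow_eq_rpow_re_of_pos hθ.1, mul_comm, neg_re]
  refine mul_le_mul_of_nonneg_right ?_ (rpow_nonneg hθ.1.le _)
  simpa using norm_ofReal_cpow_le_of_le (c := -s) (by positivity)
    (two_div_pi_le_sin_div hθ.1 hθ.2.le) (by simpa using hs)

theorem integrableOn_sin_cpow (h0 : 0 ≤ s.re) (h1 : s.re < 1) :
    IntegrableOn (fun θ : ℝ => ((Real.sin θ : ℝ) : ℂ) ^ (-s)) (Ioo 0 (π / 2)) :=
  integrableOn_Ioo_of_norm_le_rpow (by positivity) (by linarith)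
    ((continuousOn_sin_cpow _).mono (Ioo_subset_Ioo_right (by linarith [pi_pos])))
    (fun _ hθ => norm_sin_cpow_le h0 hθ)

def remainderIntegrand (s : ℂ) (θ : ℝ) : ℂ :=
  (θ : ℂ) ^ (1 - s) * ((Real.sin θ / θ : ℝ) : ℂ) ^ (-s - 1) *
    ((deriv (fun u : ℝ => Real.sin u / u) θ : ℝ) : ℂ)

lemma continuousOn_remainderIntegrand : ContinuousOn (remainderIntegrand s) (Ioo 0 π) := by
  have hderiv : ContinuousOn (deriv fun u : ℝ => Real.sin u / u) (Ioo 0 π) :=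
    ContDiffOn.continuousOn_deriv_of_isOpen
      (Real.contDiff_sin.contDiffOn.div contDiffOn_id fun _ hθ => hθ.1.ne') isOpen_Ioo le_rfl
  intro θ hθ
  exact (((continuousAt_ofReal_cpow_const _ _ (Or.inr hθ.1.ne')).mul
    (continuousAt_sin_div_cpow hθ _)).continuousWithinAt.mul
    (continuous_ofReal.comp_continuousOn hderiv θ hθ))

lemma norm_remainderIntegrand_le (hs : 0 ≤ s.re) {θ : ℝ} (hθ : θ ∈ Ioo 0 (π / 2)) :
    ‖remainderIntegrand s θ‖ ≤ 2 * (2 / π) ^ (-s.re - 1) * θ ^ (-s.re) := by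
  have hq : ‖((Real.sin θ / θ : ℝ) : ℂ) ^ (-s - 1)‖ ≤ (2 / π) ^ (-s.re - 1) := by
    simpa using norm_ofReal_cpow_le_of_le (c := -s - 1) (by positivity)
      (two_div_pi_le_sin_div hθ.1 hθ.2.le) (by simp; linarith)
  calc ‖remainderIntegrand s θ‖
      = θ ^ (1 - s.re) * ‖((Real.sin θ / θ : ℝ) : ℂ) ^ (-s - 1)‖ *
          |deriv (fun u : ℝ => Real.sin u / u) θ| := by
        simp only [remainderIntegrand, norm_mul, norm_cpow_eq_rpow_re_of_pos hθ.1, norm_real,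
          Real.norm_eq_abs, sub_re, one_re]
    _ ≤ θ ^ (1 - s.re) * (2 / π) ^ (-s.re - 1) * (2 / θ) := by
        have hθpow : 0 ≤ θ ^ (1 - s.re) := rpow_nonneg hθ.1.le _
        gcongr
        exact abs_deriv_sin_div_le hθ.1
    _ = 2 * (2 / π) ^ (-s.re - 1) * θ ^ (-s.re) := by
        rw [show -s.re = (1 - s.re) - 1 by ring, rpow_sub_one hθ.1.ne']
        ring

theorem integrableOn_remainderIntegrand (h0 : 0 ≤ s.re) (h1 : s.re < 1) :
    IntegrableOn (remainderIntegrand s) (Ioo 0 (π / 2)) :=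
  integrableOn_Ioo_of_norm_le_rpow (by positivity) (by linarith)
    (continuousOn_remainderIntegrand.mono (Ioo_subset_Ioo_right (by linarith [pi_pos])))
    (fun _ hθ => norm_remainderIntegrand_le h0 hθ)

def ibpPrimitive (s : ℂ) (θ : ℝ) : ℂ :=
  (θ : ℂ) ^ (1 - s) / (1 - s) * ((Real.sin θ / θ : ℝ) : ℂ) ^ (-s)

lemma hasDerivAt_ibpPrimitive (hs : s ≠ 1) {θ : ℝ} (hθ : θ ∈ Ioo 0 π) :
    HasDerivAt (ibpPrimitive s)
      (((Real.sin θ : ℝ) : ℂ) ^ (-s) - s / (1 - s) * remainderIntegrand s θ) θ := by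
  have hpow : HasDerivAt (fun y : ℝ => (y : ℂ) ^ (1 - s) / (1 - s)) ((θ : ℂ) ^ (-s)) θ := by
    simpa [neg_add_eq_sub] using
      hasDerivAt_ofReal_cpow_const' hθ.1.ne' (r := -s) (by simpa using hs)
  have hsinc := hasDerivAt_sin_div hθ.1.ne'
  have hsinc_cpow : HasDerivAt (fun t : ℝ => ((Real.sin t / t : ℝ) : ℂ) ^ (-s))
      (-s * ((Real.sin θ / θ : ℝ) : ℂ) ^ (-s - 1) *
        (((Real.cos θ * θ - Real.sin θ) / θ ^ 2 : ℝ) : ℂ)) θ :=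
    (hasStrictDerivAt_cpow_const (ofReal_mem_slitPlane.2 (sin_div_pos hθ))).hasDerivAt.comp θ
      (h₂ := fun z : ℂ => z ^ (-s)) hsinc.ofReal_comp
  refine (hpow.fun_mul hsinc_cpow).congr_deriv ?_
  rw [remainderIntegrand, hsinc.deriv, ofReal_sin_cpow_eq hθ]
  field_simp
  ring

lemma norm_ibpPrimitive_le (hs : 0 ≤ s.re) {θ : ℝ} (hθ : θ ∈ Ioo 0 (π / 2)) :
    ‖ibpPrimitive s θ‖ ≤ (2 / π) ^ (-s.re) / ‖1 - s‖ * θ ^ (1 - s.re) := by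
  have hq : ‖((Real.sin θ / θ : ℝ) : ℂ) ^ (-s)‖ ≤ (2 / π) ^ (-s.re) := by
    simpa using norm_ofReal_cpow_le_of_le (c := -s) (by positivity)
      (two_div_pi_le_sin_div hθ.1 hθ.2.le) (by simpa using hs)
  have hθpow : 0 ≤ θ ^ (1 - s.re) := rpow_nonneg hθ.1.le _
  rw [ibpPrimitive, norm_mul, norm_div, norm_cpow_eq_rpow_re_of_pos hθ.1, sub_re, one_re,
    div_mul_eq_mul_div, div_mul_eq_mul_div, mul_comm]
  gcongr

lemma tendsto_ibpPrimitive_zero (h0 : 0 ≤ s.re) (h1 : s.re < 1) :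
    Tendsto (ibpPrimitive s) (𝓝[>] 0) (𝓝 0) := by
  have hpow : Tendsto (fun θ : ℝ => θ ^ (1 - s.re)) (𝓝[>] 0) (𝓝 0) := by
    have := (continuousAt_rpow_const 0 (1 - s.re) (Or.inr (by linarith))).tendsto.mono_left
      (nhdsWithin_le_nhds (s := Ioi 0))
    rwa [zero_rpow (by linarith)] at this
  refine squeeze_zero_norm' ?_ (by simpa using hpow.const_mul ((2 / π) ^ (-s.re) / ‖1 - s‖))
  filter_upwards [Ioo_mem_nhdsGT (by positivity : (0 : ℝ) < π / 2)] with θ hθ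
  exact norm_ibpPrimitive_le h0 hθ

lemma ibpPrimitive_pi_div_two :
    ibpPrimitive s (π / 2) = ((π / 2 : ℝ) : ℂ) / (1 - s) := by
  have hne : ((π / 2 : ℝ) : ℂ) ≠ 0 := ofReal_ne_zero.2 (by positivity)
  have harg : arg ((π / 2 : ℝ) : ℂ) ≠ π := by
    rw [arg_ofReal_of_nonneg (by positivity)]
    exact pi_ne_zero.symm
  rw [ibpPrimitive, Real.sin_pi_div_two, one_div, ofReal_inv, inv_cpow _ _ harg, cpow_neg,
    inv_inv, div_mul_eq_mul_div, ← cpow_add _ _ hne, sub_add_cancel, cpow_one]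

end SinCpowIBP

open SinCpowIBP

/-- for `0 < Re(s) < 1`,
`∫₀^{π/2} (sin θ)^{−s} dθ
  = (π/2)/(1−s) + (s/(1−s)) ∫₀^{π/2} θ^{1−s} (sin θ/θ)^{−s−1} (sin θ/θ)' dθ`,
both integrals converging absolutely; complex powers of the positive reals `sin θ`, `θ` and
`sin θ/θ` are taken with the real branch of the logarithm (i.e. the principal `cpow`). -/
theorem Sfun_integration_by_parts (s : ℂ) (h0 : 0 < s.re) (h1 : s.re < 1) :
    IntegrableOn (fun θ : ℝ => ((Real.sin θ : ℝ) : ℂ) ^ (-s))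
      (Set.Ioo 0 (Real.pi / 2)) ∧
    IntegrableOn (fun θ : ℝ => ((θ : ℝ) : ℂ) ^ (1 - s) *
        (((Real.sin θ / θ : ℝ)) : ℂ) ^ (-s - 1) *
        ((deriv (fun u : ℝ => Real.sin u / u) θ : ℝ) : ℂ))
      (Set.Ioo 0 (Real.pi / 2)) ∧
    (∫ θ in Set.Ioo (0 : ℝ) (Real.pi / 2), ((Real.sin θ : ℝ) : ℂ) ^ (-s))
      = ((Real.pi / 2 : ℝ) : ℂ) / (1 - s) +
        (s / (1 - s)) * ∫ θ in Set.Ioo (0 : ℝ) (Real.pi / 2),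
          ((θ : ℝ) : ℂ) ^ (1 - s) * (((Real.sin θ / θ : ℝ)) : ℂ) ^ (-s - 1) *
            ((deriv (fun u : ℝ => Real.sin u / u) θ : ℝ) : ℂ) := by
  have hs : s ≠ 1 := by
    rintro rfl
    simp at h1
  have hπ : (0 : ℝ) < π / 2 := by positivity
  have hπ_mem : π / 2 ∈ Ioo 0 π := ⟨hπ, by linarith [pi_pos]⟩
  have hsin := integrableOn_sin_cpow h0.le h1
  have hrem := integrableOn_remainderIntegrand h0.le h1
  refine ⟨hsin, hrem, ?_⟩
  have hftc := intervalIntegral.integral_eq_sub_of_hasDerivAt_of_tendsto hπ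
    (fun θ hθ => hasDerivAt_ibpPrimitive hs ⟨hθ.1, hθ.2.trans hπ_mem.2⟩)
    ((intervalIntegrable_iff_integrableOn_Ioo_of_le hπ.le).2 (hsin.sub (hrem.const_mul _)))
    (tendsto_ibpPrimitive_zero h0.le h1)
    ((hasDerivAt_ibpPrimitive hs hπ_mem).continuousAt.tendsto.mono_left nhdsWithin_le_nhds)
  rw [intervalIntegral.integral_of_le hπ.le, integral_Ioc_eq_integral_Ioo,
    integral_sub hsin (hrem.const_mul _), integral_const_mul, ibpPrimitive_pi_div_two,
    sub_zero] at hftc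
  simp only [remainderIntegrand] at hftc
  linear_combination hftc

end
end

section
/- There exist constants E > 0 and, for every ε > 0, a constant C_ε > 0, such that the meromorphic continuation S̃ of S(s) = ∫₀^{π/2}(sin θ)^{−s} dθ to Re(s) < 3 satisfies |S̃(s)| ≤ C_ε · E^{Re(s)} uniformly for all s with Im(s) > 1 and Re(s) ≤ 3 − ε. -/
open MeasureTheory Complex Real

noncomputable section

/-- The integral `∫₀^{π/2} θ^{1−s} (sin θ/θ)^{−s−1} (sin θ/θ)' dθ` appearing in the
analytic continuation of `S(s) = ∫₀^{π/2} (sin θ)^{−s} dθ`. -/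
def SfunAux (s : ℂ) : ℂ :=
  ∫ θ in Set.Ioo (0 : ℝ) (Real.pi / 2),
    ((θ : ℝ) : ℂ) ^ (1 - s) * (((Real.sin θ / θ : ℝ)) : ℂ) ^ (-s - 1) *
      ((deriv (fun u : ℝ => Real.sin u / u) θ : ℝ) : ℂ)

/-- The meromorphic continuation `S̃(s) = (π/2)/(1−s) + (s/(1−s))·SfunAux(s)` of `S` to
`{Re(s) < 3}`. -/
def SfunExt (s : ℂ) : ℂ :=
  ((Real.pi / 2 : ℝ) : ℂ) / (1 - s) + (s / (1 - s)) * SfunAux s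

lemma deriv_sin_div_bound {θ : ℝ} (h0 : 0 < θ) (hπ : θ < Real.pi / 2) :
    |deriv (fun u : ℝ => Real.sin u / u) θ| ≤ θ / 2 := by
  have hθ : θ ≠ 0 := ne_of_gt h0
  have hd : deriv (fun u : ℝ => Real.sin u / u) θ
      = (Real.cos θ * θ - Real.sin θ * 1) / θ ^ 2 := by
    rw [deriv_fun_div Real.differentiableAt_sin differentiableAt_fun_id hθ]
    simp
  rw [hd]
  have hcos : 0 < Real.cos θ := Real.cos_pos_of_mem_Ioo ⟨by linarith [Real.pi_pos], hπ⟩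
  have htan : θ ≤ Real.tan θ := Real.le_tan h0.le hπ
  have h1 : θ * Real.cos θ ≤ Real.sin θ := by
    rw [Real.tan_eq_sin_div_cos] at htan
    exact (le_div_iff₀ hcos).mp htan
  have h2 : Real.sin θ - θ * Real.cos θ ≤ θ * (θ ^ 2 / 2) := by
    have hsin : Real.sin θ ≤ θ := Real.sin_le h0.le
    have hc : 1 - θ ^ 2 / 2 ≤ Real.cos θ := Real.one_sub_sq_div_two_le_cos
    nlinarith
  rw [abs_div, _root_.abs_of_nonneg (by positivity : (0:ℝ) ≤ θ ^ 2),
    _root_.abs_of_nonpos (by nlinarith : Real.cos θ * θ - Real.sin θ * 1 ≤ 0),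
    div_le_iff₀ (by positivity)]
  nlinarith

lemma integrand_bound {s : ℂ} (hs : s.re ≤ 3) {θ : ℝ} (hθ : θ ∈ Set.Ioo (0:ℝ) (Real.pi / 2)) :
    ‖((θ : ℝ) : ℂ) ^ (1 - s) * (((Real.sin θ / θ : ℝ)) : ℂ) ^ (-s - 1) *
      ((deriv (fun u : ℝ => Real.sin u / u) θ : ℝ) : ℂ)‖
      ≤ (Real.pi/2) ^ (4:ℝ) / 2 * θ ^ (2 - s.re) := by
  obtain ⟨h0, hπ⟩ := hθ
  have hπpos := Real.pi_pos
  have hb0 : 0 < Real.sin θ / θ := by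
    apply div_pos _ h0
    exact Real.sin_pos_of_pos_of_lt_pi h0 (by linarith)
  have hb1 : Real.sin θ / θ ≤ 1 := by
    rw [div_le_one h0]; exact Real.sin_le h0.le
  have hb2 : 2 / Real.pi ≤ Real.sin θ / θ := by
    rw [le_div_iff₀ h0]
    exact Real.mul_le_sin h0.le hπ.le
  have hπ2 : (1:ℝ) ≤ Real.pi / 2 := by linarith [Real.two_le_pi]
  -- norms
  have n1 : ‖((θ : ℝ) : ℂ) ^ (1 - s)‖ = θ ^ (1 - s.re) := by
    rw [Complex.norm_cpow_eq_rpow_re_of_pos h0]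
    norm_num
  have n2 : ‖(((Real.sin θ / θ : ℝ)) : ℂ) ^ (-s - 1)‖ = (Real.sin θ / θ) ^ (-s.re - 1) := by
    rw [Complex.norm_cpow_eq_rpow_re_of_pos hb0]
    norm_num
  have n3 : ‖((deriv (fun u : ℝ => Real.sin u / u) θ : ℝ) : ℂ)‖
      = |deriv (fun u : ℝ => Real.sin u / u) θ| := Complex.norm_real _
  have b2 : (Real.sin θ / θ) ^ (-s.re - 1) ≤ (Real.pi/2) ^ (4:ℝ) := by
    rcases le_or_gt 0 (-s.re - 1) with hp | hp
    · calc (Real.sin θ / θ) ^ (-s.re - 1) ≤ 1 := Real.rpow_le_one hb0.le hb1 hp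
        _ ≤ (Real.pi/2) ^ (4:ℝ) := Real.one_le_rpow hπ2 (by norm_num)
    · calc (Real.sin θ / θ) ^ (-s.re - 1)
          ≤ (2 / Real.pi) ^ (-s.re - 1) :=
            Real.rpow_le_rpow_of_nonpos (by positivity) hb2 hp.le
        _ = (Real.pi / 2) ^ (-(-s.re - 1)) := by
            rw [show (2 / Real.pi) = (Real.pi / 2)⁻¹ by rw [inv_div],
              Real.inv_rpow (by positivity), ← Real.rpow_neg (by positivity)]
        _ ≤ (Real.pi/2) ^ (4:ℝ) :=
            Real.rpow_le_rpow_of_exponent_le hπ2 (by linarith)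
  calc ‖((θ : ℝ) : ℂ) ^ (1 - s) * (((Real.sin θ / θ : ℝ)) : ℂ) ^ (-s - 1) *
      ((deriv (fun u : ℝ => Real.sin u / u) θ : ℝ) : ℂ)‖
      = θ ^ (1 - s.re) * (Real.sin θ / θ) ^ (-s.re - 1)
          * |deriv (fun u : ℝ => Real.sin u / u) θ| := by
        rw [norm_mul, norm_mul, n1, n2, n3]
    _ ≤ θ ^ (1 - s.re) * ((Real.pi/2) ^ (4:ℝ)) * (θ / 2) := by
        gcongr
        · exact deriv_sin_div_bound h0 hπ
    _ = (Real.pi/2) ^ (4:ℝ) / 2 * (θ ^ (1 - s.re) * θ ^ (1:ℝ)) := by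
        rw [Real.rpow_one]; ring
    _ = (Real.pi/2) ^ (4:ℝ) / 2 * θ ^ (2 - s.re) := by
        rw [← Real.rpow_add h0]; ring_nf

lemma SfunAux_bound {ε : ℝ} (hε : 0 < ε) {s : ℂ} (hre : s.re ≤ 3 - ε) :
    ‖SfunAux s‖ ≤ (Real.pi/2) ^ (4:ℝ) / 2 * ((Real.pi/2) ^ (3 - s.re) / ε) := by
  have hπpos := Real.pi_pos
  have hs3 : s.re ≤ 3 := by linarith
  have hr : (-1:ℝ) < 2 - s.re := by linarith
  have hIoc : IntegrableOn (fun θ : ℝ => θ ^ (2 - s.re)) (Set.Ioc 0 (Real.pi/2)) volume :=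
    (intervalIntegral.intervalIntegrable_rpow' (a := 0) (b := Real.pi/2) hr).1
  have hg : IntegrableOn
      (fun θ : ℝ => (Real.pi/2) ^ (4:ℝ) / 2 * θ ^ (2 - s.re))
      (Set.Ioo 0 (Real.pi/2)) volume :=
    (hIoc.mono_set Set.Ioo_subset_Ioc_self).const_mul _
  have hbound : ‖SfunAux s‖ ≤
      ∫ θ in Set.Ioo (0:ℝ) (Real.pi/2), (Real.pi/2) ^ (4:ℝ) / 2 * θ ^ (2 - s.re) := by
    refine MeasureTheory.norm_integral_le_of_norm_le hg ?_
    exact (ae_restrict_iff' measurableSet_Ioo).mpr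
      (Filter.Eventually.of_forall fun θ hθ => integrand_bound hs3 hθ)
  refine hbound.trans ?_
  rw [MeasureTheory.integral_const_mul]
  have hval : ∫ θ in Set.Ioo (0:ℝ) (Real.pi/2), θ ^ (2 - s.re)
      = (Real.pi/2) ^ (3 - s.re) / (3 - s.re) := by
    rw [← MeasureTheory.integral_Ioc_eq_integral_Ioo,
      ← intervalIntegral.integral_of_le (by positivity : (0:ℝ) ≤ Real.pi/2),
      integral_rpow (Or.inl hr), Real.zero_rpow (by linarith : 2 - s.re + 1 ≠ 0)]
    norm_num
    ring_nf
  rw [hval]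
  gcongr
  linarith

/-- there is a constant `E > 0` such that for every `ε > 0` there is
`C_ε > 0` with `|S̃(s)| ≤ C_ε E^{Re(s)}` uniformly for `Im(s) > 1` and `Re(s) ≤ 3 − ε`. -/
theorem SfunExt_bound :
    ∃ E : ℝ, 0 < E ∧ ∀ ε : ℝ, 0 < ε → ∃ C : ℝ, 0 < C ∧
      ∀ s : ℂ, 1 < s.im → s.re ≤ 3 - ε → ‖SfunExt s‖ ≤ C * E ^ s.re := by
  have hπpos := Real.pi_pos
  set P : ℝ := Real.pi / 2 with hP
  have hPpos : 0 < P := by positivity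
  have hP1 : (1:ℝ) ≤ P := by rw [hP]; linarith [Real.two_le_pi]
  refine ⟨2 / Real.pi, by positivity, fun ε hε => ?_⟩
  refine ⟨P ^ (4:ℝ) + 2 * (P ^ (4:ℝ) / 2 * (P ^ (3:ℝ) / ε)), by positivity, ?_⟩
  intro s him hre
  set X : ℝ := P ^ (-s.re) with hXdef
  have hXpos : 0 < X := Real.rpow_pos_of_pos hPpos _
  have hEX : (2 / Real.pi) ^ s.re = X := by
    rw [show (2 / Real.pi) = P⁻¹ by rw [hP, inv_div],
      Real.inv_rpow hPpos.le, ← Real.rpow_neg hPpos.le]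
  -- |1 - s| ≥ 1
  have h1s : (1:ℝ) ≤ ‖1 - s‖ := by
    have := Complex.abs_im_le_norm (1 - s)
    rw [Complex.sub_im, Complex.one_im] at this
    calc (1:ℝ) ≤ s.im := him.le
      _ ≤ |0 - s.im| := by rw [zero_sub, abs_neg]; exact le_abs_self _
      _ ≤ ‖1 - s‖ := this
  have h1s0 : (1 - s) ≠ 0 := by
    intro h
    rw [h, norm_zero] at h1s; linarith
  -- term 1
  have ht1 : ‖((Real.pi / 2 : ℝ) : ℂ) / (1 - s)‖ ≤ P := by
    rw [norm_div, Complex.norm_real, Real.norm_eq_abs, abs_of_pos (by positivity)]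
    calc Real.pi / 2 / ‖1 - s‖ ≤ Real.pi / 2 / 1 := by gcongr
      _ = P := by rw [div_one]
  -- term 2
  have ht2 : ‖s / (1 - s)‖ ≤ 2 := by
    rw [norm_div, div_le_iff₀ (by linarith : (0:ℝ) < ‖1 - s‖)]
    have : ‖s‖ ≤ ‖(1:ℂ)‖ + ‖1 - s‖ := by
      calc ‖s‖ = ‖1 - (1 - s)‖ := by ring_nf
        _ ≤ ‖(1:ℂ)‖ + ‖1 - s‖ := norm_sub_le _ _
    rw [norm_one] at this
    linarith
  -- SfunAux bound in terms of X
  have hA : ‖SfunAux s‖ ≤ P ^ (4:ℝ) / 2 * (P ^ (3:ℝ) / ε) * X := by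
    refine (SfunAux_bound hε hre).trans (le_of_eq ?_)
    rw [show (3:ℝ) - s.re = 3 + (-s.re) by ring, Real.rpow_add hPpos, ← hXdef]
    ring
  -- π/2 ≤ P^4 * X
  have hmain1 : P ≤ P ^ (4:ℝ) * X := by
    have h1 : (1:ℝ) ≤ P ^ ((3:ℝ) + (-s.re)) :=
      Real.one_le_rpow hP1 (by linarith)
    calc P = P ^ (1:ℝ) := (Real.rpow_one P).symm
      _ ≤ P ^ (1:ℝ) * P ^ ((3:ℝ) + (-s.re)) := le_mul_of_one_le_right (by positivity) h1
      _ = P ^ (4:ℝ) * X := by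
        rw [← Real.rpow_add hPpos,
          show (1:ℝ) + (3 + -s.re) = 4 + -s.re by ring,
          Real.rpow_add hPpos, ← hXdef]
  -- combine
  rw [hEX]
  calc ‖SfunExt s‖ ≤ ‖((Real.pi / 2 : ℝ) : ℂ) / (1 - s)‖ + ‖s / (1 - s)‖ * ‖SfunAux s‖ := by
        rw [SfunExt]
        exact (norm_add_le _ _).trans (by rw [norm_mul])
    _ ≤ P + 2 * (P ^ (4:ℝ) / 2 * (P ^ (3:ℝ) / ε) * X) := by
        gcongr
    _ ≤ P ^ (4:ℝ) * X + 2 * (P ^ (4:ℝ) / 2 * (P ^ (3:ℝ) / ε) * X) := by linarith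
    _ = (P ^ (4:ℝ) + 2 * (P ^ (4:ℝ) / 2 * (P ^ (3:ℝ) / ε))) * X := by ring

end
end

section
/- Let f be a smooth function on ℝ compactly supported in (0,∞). Then for every nonnegative integer E and all reals 0 < a ≤ b, there exists a constant C > 0 such that for every s ∈ ℂ with a ≤ Re(s) ≤ b one has |∫₀^∞ f(t) t^{s−1} dt| ≤ C / ( |s| · (1+|s|)^E ). -/
open MeasureTheory Complex Real

noncomputable section

open Filter Set in
private lemma mellin_integrable_aux (g : ℝ → ℂ) (hgc : Continuous g)
    (hgcpt : HasCompactSupport g) {s : ℂ} (hs : 0 < s.re) :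
    IntegrableOn (fun t : ℝ => g t * (t : ℂ) ^ (s - 1)) (Set.Ioi 0) := by
  obtain ⟨R, hR0, hRg⟩ := hgcpt.exists_pos_le_norm
  obtain ⟨M, hM⟩ := hgcpt.exists_bound_of_continuous hgc
  have hmeas : AEStronglyMeasurable (fun t : ℝ => g t * (t : ℂ) ^ (s - 1))
      (volume.restrict (Set.Ioi 0)) := by
    apply ContinuousOn.aestronglyMeasurable _ measurableSet_Ioi
    apply hgc.continuousOn.mul
    intro t ht
    exact (continuousAt_ofReal_cpow_const t (s - 1) (Or.inr (ne_of_gt ht))).continuousWithinAt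
  have hsplit : Set.Ioc (0 : ℝ) R ∪ Set.Ioi R = Set.Ioi 0 := Set.Ioc_union_Ioi_eq_Ioi hR0.le
  rw [← hsplit]
  apply IntegrableOn.union
  · -- on Ioc 0 R
    have hbound : IntegrableOn (fun t : ℝ => M * t ^ (s.re - 1)) (Set.Ioc 0 R) := by
      have := (intervalIntegral.intervalIntegrable_rpow' (a := 0) (b := R) (r := s.re - 1) (by linarith))
      rw [intervalIntegrable_iff_integrableOn_Ioc_of_le hR0.le] at this
      exact this.const_mul M
    apply Integrable.mono' hbound (hmeas.mono_set (Set.Ioc_subset_Ioi_self))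
    rw [ae_restrict_iff' measurableSet_Ioc]
    refine Filter.Eventually.of_forall fun t ht => ?_
    rw [norm_mul, Complex.norm_cpow_eq_rpow_re_of_pos ht.1]
    have : (s - 1).re = s.re - 1 := by simp
    rw [this]
    exact mul_le_mul_of_nonneg_right (hM t) (Real.rpow_nonneg ht.1.le _)
  · -- on Ioi R : function is zero
    rw [integrableOn_congr_fun (g := fun _ => (0 : ℂ)) ?_ measurableSet_Ioi]
    · exact integrableOn_zero
    · intro t ht
      have : g t = 0 := hRg t (by rw [Real.norm_eq_abs, abs_of_pos (hR0.trans ht)]; exact le_of_lt ht)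
      simp [this]

open Filter Set in
private lemma mellin_ibp (g : ℝ → ℂ) (hg : ContDiff ℝ (⊤ : ℕ∞) g) (hgcpt : HasCompactSupport g)
    (hgsupp : Function.support g ⊆ Set.Ioi 0) {s : ℂ} (hs : 0 < s.re) :
    ∫ t in Set.Ioi (0 : ℝ), g t * (t : ℂ) ^ (s - 1)
      = -(1 / s) * ∫ t in Set.Ioi (0 : ℝ), ((t : ℂ) * deriv g t) * (t : ℂ) ^ (s - 1) := by
  have hs0 : s ≠ 0 := fun h => by simp [h] at hs
  have hderivsmooth : ContDiff ℝ (⊤ : ℕ∞) (deriv g) := (contDiff_infty_iff_deriv.mp hg).2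
  have hu : ∀ x ∈ Set.Ioi (0 : ℝ), HasDerivAt g (deriv g x) x := fun x _ =>
    (hg.differentiable (by simp)).differentiableAt.hasDerivAt
  have hv : ∀ x ∈ Set.Ioi (0 : ℝ),
      HasDerivAt (fun t : ℝ => (t : ℂ) ^ s / s) ((x : ℂ) ^ (s - 1)) x := by
    intro x hx
    have := hasDerivAt_ofReal_cpow_const' (ne_of_gt hx) (r := s - 1)
      (by intro h; exact hs0 (sub_eq_neg_self.mp h))
    simpa using this
  -- integrability of u * v'
  have huv' : IntegrableOn (g * fun x : ℝ => (x : ℂ) ^ (s - 1)) (Set.Ioi 0) :=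
    mellin_integrable_aux g (hg.continuous) hgcpt hs
  -- integrability of u' * v
  have hu'v : IntegrableOn ((deriv g) * fun x : ℝ => (x : ℂ) ^ s / s) (Set.Ioi 0) := by
    have h1 : IntegrableOn (fun t : ℝ => (deriv g t / s) * (t : ℂ) ^ ((s + 1) - 1))
        (Set.Ioi 0) :=
      mellin_integrable_aux (fun t => deriv g t / s) (hderivsmooth.continuous.div_const s)
        ((hgcpt.deriv).comp_left (g := fun z : ℂ => z / s) (zero_div s)) (by simp; linarith)
    apply h1.congr_fun _ measurableSet_Ioi
    intro t _
    simp only [Pi.mul_apply, add_sub_cancel_right]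
    ring
  -- boundary at 0
  have h_zero : Tendsto (g * fun t : ℝ => (t : ℂ) ^ s / s) (nhdsWithin 0 (Set.Ioi 0)) (nhds 0) := by
    have hgz : Tendsto g (nhdsWithin 0 (Set.Ioi 0)) (nhds (g 0)) :=
      (hg.continuous.tendsto 0).mono_left nhdsWithin_le_nhds
    have hvz : Tendsto (fun t : ℝ => (t : ℂ) ^ s / s) (nhdsWithin 0 (Set.Ioi 0)) (nhds 0) := by
      have : Tendsto (fun t : ℝ => (t : ℂ) ^ s) (nhdsWithin 0 (Set.Ioi 0)) (nhds 0) := by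
        have hc := continuousAt_ofReal_cpow_const 0 s (Or.inl hs)
        have h0 : ((0 : ℝ) : ℂ) ^ s = 0 := by
          rw [Complex.ofReal_zero, Complex.zero_cpow hs0]
        rw [← h0]
        exact hc.continuousWithinAt
      simpa using this.div_const s
    have := hgz.mul hvz
    simpa [Pi.mul_def] using this
  -- boundary at ∞
  have h_infty : Tendsto (g * fun t : ℝ => (t : ℂ) ^ s / s) atTop (nhds 0) := by
    obtain ⟨R, hR0, hRg⟩ := hgcpt.exists_pos_le_norm
    apply Tendsto.congr' _ tendsto_const_nhds
    filter_upwards [eventually_ge_atTop R] with t ht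
    have : g t = 0 := hRg t (le_trans ht (le_abs_self t))
    simp [this]
  have key := integral_Ioi_mul_deriv_eq_deriv_mul hu hv huv' hu'v h_zero h_infty
  rw [key, ← MeasureTheory.integral_const_mul]
  rw [show (0 : ℂ) - 0 - (∫ x in Set.Ioi (0 : ℝ), deriv g x * ((x : ℂ) ^ s / s))
      = ∫ x in Set.Ioi (0 : ℝ), -(deriv g x * ((x : ℂ) ^ s / s)) from by
    rw [MeasureTheory.integral_neg]; ring]
  apply setIntegral_congr_fun measurableSet_Ioi
  intro t ht
  have ht' : (t : ℂ) ≠ 0 := Complex.ofReal_ne_zero.mpr (ne_of_gt ht)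
  have hcp : (t : ℂ) ^ s = (t : ℂ) * (t : ℂ) ^ (s - 1) := by
    have h := Complex.cpow_add (x := (t : ℂ)) 1 (s - 1) ht'
    rw [Complex.cpow_one, show (1 : ℂ) + (s - 1) = s by ring] at h
    exact h
  show -(deriv g t * ((t : ℂ) ^ s / s)) = -(1 / s) * ((t : ℂ) * deriv g t * (t : ℂ) ^ (s - 1))
  rw [hcp]
  ring

/-- iterated "Mellin derivative" operator -/
private def mellinD (g : ℝ → ℂ) : ℝ → ℂ := fun t => (t : ℂ) * deriv g t

private lemma mellinD_props (g : ℝ → ℂ) (hg : ContDiff ℝ (⊤ : ℕ∞) g) (hgcpt : HasCompactSupport g)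
    (hgsupp : Function.support g ⊆ Set.Ioi 0) :
    ContDiff ℝ (⊤ : ℕ∞) (mellinD g) ∧ HasCompactSupport (mellinD g) ∧
      Function.support (mellinD g) ⊆ Set.Ioi 0 := by
  have hderivsmooth : ContDiff ℝ (⊤ : ℕ∞) (deriv g) := (contDiff_infty_iff_deriv.mp hg).2
  refine ⟨Complex.ofRealCLM.contDiff.mul hderivsmooth, ?_, ?_⟩
  · exact (hgcpt.deriv).mul_left
  · intro t ht
    simp only [mellinD, Function.mem_support, mul_ne_zero_iff] at ht
    have ht0 : t ≠ 0 := fun h => ht.1 (by simp [h])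
    have hts : t ∈ tsupport g := by
      by_contra hc
      exact ht.2 (Function.notMem_support.mp fun hd => hc (support_deriv_subset hd))
    have : t ∈ Set.Ici (0 : ℝ) := by
      have := closure_mono hgsupp
      rw [closure_Ioi] at this
      exact this hts
    exact lt_of_le_of_ne this (Ne.symm ht0)

private lemma mellin_iter (f : ℝ → ℂ) (hf : ContDiff ℝ (⊤ : ℕ∞) f) (hfcpt : HasCompactSupport f)
    (hfsupp : Function.support f ⊆ Set.Ioi 0) (k : ℕ) {s : ℂ} (hs : 0 < s.re) :
    ∫ t in Set.Ioi (0 : ℝ), f t * (t : ℂ) ^ (s - 1)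
      = (-(1 / s)) ^ k * ∫ t in Set.Ioi (0 : ℝ), (mellinD^[k] f) t * (t : ℂ) ^ (s - 1) := by
  induction k with
  | zero => simp
  | succ n ih =>
    have props : ContDiff ℝ (⊤ : ℕ∞) (mellinD^[n] f) ∧ HasCompactSupport (mellinD^[n] f) ∧
        Function.support (mellinD^[n] f) ⊆ Set.Ioi 0 := by
      clear ih
      induction n with
      | zero => exact ⟨hf, hfcpt, hfsupp⟩
      | succ m ihm =>
        rw [Function.iterate_succ_apply']
        exact mellinD_props _ ihm.1 ihm.2.1 ihm.2.2
    rw [ih, Function.iterate_succ_apply',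
      mellin_ibp (mellinD^[n] f) props.1 props.2.1 props.2.2 hs]
    rw [pow_succ]
    ring_nf
    rfl

/-- for `f` smooth and compactly supported in `(0,∞)`, every integer `E ≥ 0`
and all `0 < a ≤ b`, the Mellin transform `f̂(s) = ∫₀^∞ f(t) t^{s−1} dt` satisfies
`|f̂(s)| ≤ C / (|s| (1+|s|)^E)` uniformly on the strip `a ≤ Re(s) ≤ b`. -/
theorem mellin_rapid_decay (f : ℝ → ℂ)
    (hfsmooth : ContDiff ℝ (⊤ : ℕ∞) f) (hfcpt : HasCompactSupport f)
    (hfsupp : Function.support f ⊆ Set.Ioi 0)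
    (E : ℕ) (a b : ℝ) (ha : 0 < a) (hab : a ≤ b) :
    ∃ C : ℝ, 0 < C ∧ ∀ s : ℂ, a ≤ s.re → s.re ≤ b →
      ‖∫ t in Set.Ioi (0 : ℝ), f t * (t : ℂ) ^ (s - 1)‖ ≤ C / (‖s‖ * (1 + ‖s‖) ^ E) := by
  -- properties of the iterated derivative g = mellinD^[E+1] f
  have props : ∀ n : ℕ, ContDiff ℝ (⊤ : ℕ∞) (mellinD^[n] f) ∧ HasCompactSupport (mellinD^[n] f) ∧
      Function.support (mellinD^[n] f) ⊆ Set.Ioi 0 := by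
    intro n
    induction n with
    | zero => exact ⟨hfsmooth.of_le (by simp), hfcpt, hfsupp⟩
    | succ m ihm =>
      rw [Function.iterate_succ_apply']
      exact mellinD_props _ ihm.1 ihm.2.1 ihm.2.2
  set g := mellinD^[E + 1] f with hg
  obtain ⟨hgsm, hgcpt, hgsupp⟩ := props (E + 1)
  obtain ⟨R, hR0, hRg⟩ := hgcpt.exists_pos_le_norm
  obtain ⟨M, hM⟩ := hgcpt.exists_bound_of_continuous hgsm.continuous
  have hM0 : 0 ≤ M := le_trans (norm_nonneg _) (hM 0)
  set R' := max R 1 with hR'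
  have hR'1 : 1 ≤ R' := le_max_right _ _
  have hR'0 : 0 < R' := lt_of_lt_of_le one_pos hR'1
  -- the constant
  set K := M * R' ^ b / a with hK
  have hK0 : 0 ≤ K := by
    apply div_nonneg _ ha.le
    exact mul_nonneg hM0 (Real.rpow_nonneg hR'0.le _)
  refine ⟨(K + 1) * (1 + 1 / a) ^ E, by positivity, ?_⟩
  intro s hsa hsb
  have hsre : 0 < s.re := lt_of_lt_of_le ha hsa
  have hs0 : s ≠ 0 := fun h => by rw [h] at hsre; simp at hsre
  have hsn : a ≤ ‖s‖ := le_trans hsa (le_trans (le_abs_self _) (Complex.abs_re_le_norm s))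
  have hsn0 : 0 < ‖s‖ := lt_of_lt_of_le ha hsn
  -- bound the integral of g
  have hbound : ‖∫ t in Set.Ioi (0 : ℝ), g t * (t : ℂ) ^ (s - 1)‖ ≤ K := by
    have hint : ∫ t in Set.Ioi (0 : ℝ), g t * (t : ℂ) ^ (s - 1)
        = ∫ t in Set.Ioc (0 : ℝ) R', g t * (t : ℂ) ^ (s - 1) := by
      rw [← Set.Ioc_union_Ioi_eq_Ioi hR'0.le, setIntegral_union (Set.Ioc_disjoint_Ioi le_rfl)
        measurableSet_Ioi ((mellin_integrable_aux g hgsm.continuous hgcpt hsre).mono_set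
          Set.Ioc_subset_Ioi_self)
        ((mellin_integrable_aux g hgsm.continuous hgcpt hsre).mono_set (Set.Ioi_subset_Ioi
          hR'0.le))]
      have : ∫ t in Set.Ioi R', g t * (t : ℂ) ^ (s - 1) = 0 := by
        apply setIntegral_eq_zero_of_forall_eq_zero
        intro t ht
        have : g t = 0 := hRg t (by
          rw [Real.norm_eq_abs, abs_of_pos (lt_trans hR'0 ht)]
          exact le_of_lt (lt_of_le_of_lt (le_max_left R 1) ht))
        simp [this]
      rw [this, add_zero]
    rw [hint]
    have hintbd : IntegrableOn (fun t : ℝ => M * t ^ (s.re - 1)) (Set.Ioc 0 R') := by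
      have := (intervalIntegral.intervalIntegrable_rpow' (a := 0) (b := R') (r := s.re - 1) (by linarith))
      rw [intervalIntegrable_iff_integrableOn_Ioc_of_le hR'0.le] at this
      exact this.const_mul M
    calc ‖∫ t in Set.Ioc (0 : ℝ) R', g t * (t : ℂ) ^ (s - 1)‖
        ≤ ∫ t in Set.Ioc (0 : ℝ) R', M * t ^ (s.re - 1) := by
          apply norm_integral_le_of_norm_le hintbd
          rw [ae_restrict_iff' measurableSet_Ioc]
          refine Filter.Eventually.of_forall fun t ht => ?_
          rw [norm_mul, Complex.norm_cpow_eq_rpow_re_of_pos ht.1]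
          have : (s - 1).re = s.re - 1 := by simp
          rw [this]
          exact mul_le_mul_of_nonneg_right (hM t) (Real.rpow_nonneg ht.1.le _)
      _ = M * (R' ^ s.re / s.re) := by
          rw [← intervalIntegral.integral_of_le hR'0.le, intervalIntegral.integral_const_mul,
            integral_rpow (Or.inl (by linarith))]
          rw [sub_add_cancel]
          rw [Real.zero_rpow (ne_of_gt hsre)]
          ring
      _ ≤ K := by
          have heq : M * (R' ^ s.re / s.re) = M * R' ^ s.re / s.re := by ring
          rw [heq, hK]
          apply div_le_div₀ (by positivity) _ ha hsa
          apply mul_le_mul_of_nonneg_left _ hM0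
          exact Real.rpow_le_rpow_of_exponent_le hR'1 hsb
  -- combine
  rw [mellin_iter f (hfsmooth.of_le (by simp)) hfcpt hfsupp (E + 1) hsre]
  rw [norm_mul, norm_pow, norm_neg, norm_div, norm_one]
  have h1 : (1 / ‖s‖) ^ (E + 1) * ‖∫ t in Set.Ioi (0 : ℝ), g t * (t : ℂ) ^ (s - 1)‖
      ≤ (1 / ‖s‖) ^ (E + 1) * K :=
    mul_le_mul_of_nonneg_left hbound (by positivity)
  refine le_trans h1 ?_
  rw [one_div, inv_pow, ← div_eq_inv_mul]
  rw [div_le_div_iff₀ (by positivity) (by positivity)]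
  have h2 : (1 + ‖s‖) ^ E ≤ ((1 + 1 / a) * ‖s‖) ^ E := by
    apply pow_le_pow_left₀ (by positivity)
    have : 1 ≤ ‖s‖ / a := (one_le_div ha).mpr hsn
    calc 1 + ‖s‖ ≤ ‖s‖ / a + ‖s‖ := by linarith
      _ = (1 + 1 / a) * ‖s‖ := by ring
  calc K * (‖s‖ * (1 + ‖s‖) ^ E) ≤ K * (‖s‖ * ((1 + 1 / a) * ‖s‖) ^ E) := by
        apply mul_le_mul_of_nonneg_left _ hK0
        exact mul_le_mul_of_nonneg_left h2 hsn0.le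
    _ = K * (1 + 1 / a) ^ E * ‖s‖ ^ (E + 1) := by rw [mul_pow]; ring
    _ ≤ (K + 1) * (1 + 1 / a) ^ E * ‖s‖ ^ (E + 1) := by
        apply mul_le_mul_of_nonneg_right _ (by positivity)
        apply mul_le_mul_of_nonneg_right (by linarith) (by positivity)

end
end

section
/- For all reals 0 < a ≤ b there exists a constant C > 0 such that for every s ∈ ℂ with a ≤ Re(s) ≤ b and |Im(s)| ≥ 1, one has |Γ(s) · cos(πs/2)| ≤ C · |s|^{Re(s) − 1/2}. -/
/-!
Euler's limit formula gives `|Γ(σ + it)| / Γ(σ) = ∏_{j ≥ 0} (σ + j) / |s + j|`, and since every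
factor is at most `1`, each partial product is an upper bound. The `j`-th factor is
`exp (-logFactor t (σ + j))` with `logFactor t x = ½ log (1 + t² / x²)`, a convex function of `x`
with the explicit primitive `x · logFactor t x + t · arctan (x / t)`. The trapezoid rule for convex
functions bounds the sum of the `logFactor`s below by the integral plus half the endpoint values:
the integral contributes `π |t| / 2` and the half endpoint value at `σ` produces the exponent
`σ - 1/2`, so that `|Γ(s)| ≤ Γ(σ) (|s| / σ)^(σ - 1/2) e^(σ + 1 - π |t| / 2)`. Finally
`|cos (π s / 2)| ≤ e^(π |t| / 2)` and the remaining factor is continuous in `σ ∈ [a, b]`.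
-/

open Complex Real

noncomputable section

open Set MeasureTheory Filter

theorem Real.arctan_le_self {x : ℝ} (hx : 0 ≤ x) : arctan x ≤ x := by
  simpa only [tan_arctan] using le_tan (arctan_nonneg.2 hx) (arctan_lt_pi_div_two x)

theorem ConvexOn.map_add_map_reflect_le {f : ℝ → ℝ} {p q x : ℝ} (hf : ConvexOn ℝ (Icc p q) f)
    (hx : x ∈ Icc p q) : f x + f (p + q - x) ≤ f p + f q := by
  rcases hx.1.eq_or_lt with rfl | hpx
  · simp
  have hpq : 0 < q - p := by linarith [hx.2]
  have hp : p ∈ Icc p q := left_mem_Icc.2 (by linarith)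
  have hq : q ∈ Icc p q := right_mem_Icc.2 (by linarith)
  have ha : 0 ≤ (q - x) / (q - p) := div_nonneg (by linarith [hx.2]) hpq.le
  have hb : 0 ≤ (x - p) / (q - p) := div_nonneg (by linarith) hpq.le
  have h₁ := hf.2 hp hq ha hb (by field_simp; ring)
  have h₂ := hf.2 hp hq hb ha (by field_simp; ring)
  simp only [smul_eq_mul] at h₁ h₂
  have e₁ : (q - x) / (q - p) * p + (x - p) / (q - p) * q = x := by field_simp; ring
  have e₂ : (x - p) / (q - p) * p + (q - x) / (q - p) * q = p + q - x := by field_simp; ring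
  rw [e₁] at h₁
  rw [e₂] at h₂
  have e₃ : (q - x) / (q - p) + (x - p) / (q - p) = 1 := by field_simp; ring
  linear_combination h₁ + h₂ + (f p + f q) * e₃

theorem ConvexOn.integral_le_trapezoid {f : ℝ → ℝ} {p q : ℝ} (hpq : p ≤ q)
    (hf : ConvexOn ℝ (Icc p q) f) (hint : IntervalIntegrable f volume p q) :
    ∫ x in p..q, f x ≤ (q - p) * (f p + f q) / 2 := by
  have hrefl : ∫ x in p..q, f (p + q - x) = ∫ x in p..q, f x := by
    rw [intervalIntegral.integral_comp_sub_left f (p + q)]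
    ring_nf
  have hint' : IntervalIntegrable (fun x => f (p + q - x)) volume p q := by
    simpa using hint.symm.comp_sub_left (p + q)
  have := intervalIntegral.integral_mono_on hpq (hint.add hint') intervalIntegrable_const
    fun x hx => hf.map_add_map_reflect_le hx
  rw [intervalIntegral.integral_add hint hint', hrefl, intervalIntegral.integral_const,
    smul_eq_mul] at this
  linarith

def logFactor (t x : ℝ) : ℝ := Real.log (x ^ 2 + t ^ 2) / 2 - Real.log x

def logFactorPrimitive (t x : ℝ) : ℝ := x * logFactor t x + t * Real.arctan (x / t)

section logFactor

variable {t x : ℝ}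

theorem logFactor_nonneg (hx : 0 < x) : 0 ≤ logFactor t x := by
  have : Real.log (x ^ 2) ≤ Real.log (x ^ 2 + t ^ 2) :=
    Real.log_le_log (by positivity) (by linarith [sq_nonneg t])
  rw [Real.log_pow] at this
  unfold logFactor
  push_cast at this
  linarith

theorem hasDerivAt_logFactor (hx : 0 < x) :
    HasDerivAt (logFactor t) (-(t ^ 2 / (x * (x ^ 2 + t ^ 2)))) x := by
  have hsq : HasDerivAt (fun x => x ^ 2 + t ^ 2) (2 * x) x := by
    simpa using (hasDerivAt_pow 2 x).add_const (t ^ 2)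
  refine ((hsq.log (by positivity)).div_const 2 |>.sub (Real.hasDerivAt_log hx.ne')).congr_deriv ?_
  field_simp
  ring

theorem convexOn_logFactor (t : ℝ) : ConvexOn ℝ (Ioi 0) (logFactor t) := by
  refine MonotoneOn.convexOn_of_deriv (convex_Ioi 0)
    (fun x hx => (hasDerivAt_logFactor hx).continuousAt.continuousWithinAt) ?_ ?_ <;>
    rw [interior_Ioi]
  · exact fun x hx => (hasDerivAt_logFactor hx).differentiableAt.differentiableWithinAt
  intro x (hx : 0 < x) y (hy : 0 < y) hxy
  rw [(hasDerivAt_logFactor hx).deriv, (hasDerivAt_logFactor hy).deriv, neg_le_neg_iff]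
  gcongr

theorem hasDerivAt_logFactorPrimitive (ht : t ≠ 0) (hx : 0 < x) :
    HasDerivAt (logFactorPrimitive t) (logFactor t x) x := by
  have harctan : HasDerivAt (fun x => Real.arctan (x / t)) (1 / (1 + (x / t) ^ 2) * (1 / t)) x :=
    ((Real.hasDerivAt_arctan _).comp x ((hasDerivAt_id' x).div_const t)).congr_deriv (by simp)
  refine (((hasDerivAt_id' x).mul (hasDerivAt_logFactor hx)).add
    (harctan.const_mul t)).congr_deriv ?_
  field_simp
  ring

theorem logFactorPrimitive_add_one_sub_le (ht : t ≠ 0) (hx : 0 < x) :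
    logFactorPrimitive t (x + 1) - logFactorPrimitive t x ≤
      (logFactor t x + logFactor t (x + 1)) / 2 := by
  have hsub : Icc x (x + 1) ⊆ Ioi 0 := fun y hy => hx.trans_le hy.1
  have hderiv : ∀ y ∈ uIcc x (x + 1), HasDerivAt (logFactorPrimitive t) (logFactor t y) y := by
    rw [uIcc_of_le (by linarith)]
    exact fun y hy => hasDerivAt_logFactorPrimitive ht (hsub hy)
  have hcont : ContinuousOn (logFactor t) (Icc x (x + 1)) :=
    fun y hy => (hasDerivAt_logFactor (hsub hy)).continuousAt.continuousWithinAt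
  have hint : IntervalIntegrable (logFactor t) volume x (x + 1) :=
    hcont.intervalIntegrable_of_Icc (by linarith)
  rw [← intervalIntegral.integral_eq_sub_of_hasDerivAt hderiv hint]
  simpa using ((convexOn_logFactor t).subset hsub (convex_Icc _ _)).integral_le_trapezoid
    (by linarith) hint

theorem logFactorPrimitive_le (ht : 0 < t) (hx : 0 ≤ x) :
    logFactorPrimitive t x ≤ x * logFactor t x + x := by
  have := mul_le_mul_of_nonneg_left (Real.arctan_le_self (div_nonneg hx ht.le)) ht.le
  rw [mul_div_cancel₀ x ht.ne'] at this
  unfold logFactorPrimitive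
  linarith

theorem le_logFactorPrimitive (ht : 0 < t) (hx : 0 < x) :
    π * t / 2 - t ^ 2 / x ≤ logFactorPrimitive t x := by
  have harctan : π / 2 - t / x ≤ Real.arctan (x / t) := by
    have := Real.arctan_le_self (div_pos ht hx).le
    rw [← inv_div, Real.arctan_inv_of_pos (div_pos hx ht), inv_div] at this
    linarith
  calc π * t / 2 - t ^ 2 / x = t * (π / 2 - t / x) := by ring
    _ ≤ t * Real.arctan (x / t) := by gcongr
    _ ≤ logFactorPrimitive t x := by
      unfold logFactorPrimitive
      linarith [mul_nonneg hx.le (logFactor_nonneg (t := t) hx)]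

theorem le_sum_range_logFactor (ht : 0 < t) (hx : 0 < x) (n : ℕ) :
    logFactorPrimitive t (x + n) - logFactorPrimitive t x +
        (logFactor t x + logFactor t (x + n)) / 2 ≤
      ∑ j ∈ Finset.range (n + 1), logFactor t (x + j) := by
  induction n with
  | zero => simp
  | succ n ih =>
    have := logFactorPrimitive_add_one_sub_le ht.ne' (show 0 < x + n by positivity)
    rw [Finset.sum_range_succ, Nat.cast_succ, ← add_assoc]
    linarith

@[simp] theorem logFactor_abs : logFactor |t| x = logFactor t x := by
  simp [logFactor]

theorem logFactor_im_re (z : ℂ) : logFactor z.im z.re = Real.log ‖z‖ - Real.log z.re := by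
  have : z.re ^ 2 + z.im ^ 2 = normSq z := by rw [normSq_apply]; ring
  rw [logFactor, this, ← Real.log_sqrt (normSq_nonneg z), ← Complex.norm_def]

end logFactor

theorem Complex.norm_GammaSeq {s : ℂ} (hs : 0 < s.re) (n : ℕ) :
    ‖GammaSeq s n‖ = Real.GammaSeq s.re n * ∏ j ∈ Finset.range (n + 1), (s.re + j) / ‖s + j‖ := by
  have hne : ∀ j : ℕ, ‖s + j‖ ≠ 0 := fun j => by
    rw [norm_ne_zero_iff]
    intro h
    simpa [h] using (show 0 < (s + j).re by simp; positivity)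
  rw [GammaSeq, Real.GammaSeq, norm_div, norm_mul, norm_natCast_cpow_of_re_ne_zero n hs.ne',
    norm_prod, Finset.prod_div_distrib, Complex.norm_natCast]
  have := Finset.prod_ne_zero_iff.2 fun j (_ : j ∈ Finset.range (n + 1)) => hne j
  have := Finset.prod_ne_zero_iff.2 fun j (_ : j ∈ Finset.range (n + 1)) =>
    (show s.re + j ≠ 0 by positivity)
  field_simp

theorem Complex.norm_Gamma_le_mul_prod {s : ℂ} (hs : 0 < s.re) (m : ℕ) :
    ‖Gamma s‖ ≤ Real.Gamma s.re * ∏ j ∈ Finset.range (m + 1), (s.re + j) / ‖s + j‖ := by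
  set P : ℕ → ℝ := fun n => ∏ j ∈ Finset.range (n + 1), (s.re + j) / ‖s + j‖
  have hfactor : ∀ j : ℕ, 0 ≤ (s.re + j) / ‖s + j‖ ∧ (s.re + j) / ‖s + j‖ ≤ 1 := fun j => by
    have h : s.re + j ≤ ‖s + j‖ := by simpa using re_le_norm (s + j)
    exact ⟨by positivity, div_le_one_of_le₀ h (norm_nonneg _)⟩
  have hP : Antitone P := antitone_nat_of_succ_le fun n => by
    simp only [P, Finset.prod_range_succ _ (n + 1)]
    exact mul_le_of_le_one_right (Finset.prod_nonneg fun j _ => (hfactor j).1) (hfactor _).2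
  refine le_of_tendsto_of_tendsto (GammaSeq_tendsto_Gamma s).norm
    ((Real.GammaSeq_tendsto_Gamma s.re).mul_const (P m)) ?_
  filter_upwards [eventually_ge_atTop m] with n hn
  rw [norm_GammaSeq hs]
  have : 0 ≤ Real.GammaSeq s.re n := by unfold Real.GammaSeq; positivity
  exact mul_le_mul_of_nonneg_left (hP hn) this

theorem Complex.re_div_norm_eq_exp {z : ℂ} (hz : 0 < z.re) :
    z.re / ‖z‖ = Real.exp (-logFactor z.im z.re) := by
  have : 0 < ‖z‖ := hz.trans_le (re_le_norm z)
  rw [logFactor_im_re, neg_sub, Real.exp_sub, Real.exp_log hz, Real.exp_log this]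

theorem Complex.norm_Gamma_le {s : ℂ} (hs : 0 < s.re) (him : s.im ≠ 0) :
    ‖Gamma s‖ ≤
      Real.Gamma s.re * (‖s‖ / s.re) ^ (s.re - 1 / 2) * Real.exp (s.re + 1 - π * |s.im| / 2) := by
  set σ := s.re
  set t := |s.im|
  have ht : 0 < t := abs_pos.2 him
  set n := ⌈t ^ 2⌉₊
  have hσn : 0 < σ + n := by positivity
  have hprod : ∏ j ∈ Finset.range (n + 1), (σ + j) / ‖s + j‖ =
      Real.exp (-∑ j ∈ Finset.range (n + 1), logFactor t (σ + j)) := by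
    rw [← Finset.sum_neg_distrib, Real.exp_sum]
    refine Finset.prod_congr rfl fun j _ => ?_
    simpa [t] using Complex.re_div_norm_eq_exp (z := s + j) (by simp; positivity)
  have hsum := le_sum_range_logFactor ht hs n
  have htail : t ^ 2 / (σ + n) ≤ 1 :=
    div_le_one_of_le₀ (by linarith [Nat.le_ceil (t ^ 2)]) hσn.le
  have hF := le_logFactorPrimitive ht hσn
  have hF' := logFactorPrimitive_le ht hs.le
  have hlast := logFactor_nonneg (t := t) hσn
  have hs' : 0 < ‖s‖ := hs.trans_le (re_le_norm s)
  have hexp : -∑ j ∈ Finset.range (n + 1), logFactor t (σ + j) ≤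
      (σ - 1 / 2) * logFactor t σ + σ + 1 - π * t / 2 := by
    linear_combination hsum + hF + hF' + hlast / 2 + htail
  have hfσ : logFactor t σ = Real.log ‖s‖ - Real.log σ := by
    rw [logFactor_abs]; exact logFactor_im_re s
  calc ‖Gamma s‖ ≤ Real.Gamma σ * ∏ j ∈ Finset.range (n + 1), (σ + j) / ‖s + j‖ :=
        norm_Gamma_le_mul_prod hs n
    _ ≤ Real.Gamma σ * Real.exp ((σ - 1 / 2) * logFactor t σ + σ + 1 - π * t / 2) := by
        rw [hprod]
        gcongr
    _ = _ := by
      rw [hfσ, Real.rpow_def_of_pos (div_pos hs' hs), Real.log_div hs'.ne' hs.ne', mul_assoc,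
        ← Real.exp_add]
      ring_nf

theorem Complex.norm_cos_le_exp_abs_im (z : ℂ) : ‖cos z‖ ≤ Real.exp |z.im| := by
  have h₁ : ‖exp (z * I)‖ ≤ Real.exp |z.im| := by
    rw [norm_exp]; gcongr; simpa using neg_le_abs z.im
  have h₂ : ‖exp (-z * I)‖ ≤ Real.exp |z.im| := by
    rw [norm_exp]; gcongr; simpa using le_abs_self z.im
  calc ‖cos z‖ ≤ (‖exp (z * I)‖ + ‖exp (-z * I)‖) / 2 := by
        rw [Complex.cos, norm_div, Complex.norm_two]
        gcongr
        exact norm_add_le _ _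
    _ ≤ Real.exp |z.im| := by linarith

theorem gamma_cos_bound_general (a b : ℝ) (ha : 0 < a) :
    ∃ C : ℝ, 0 < C ∧ ∀ s : ℂ, a ≤ s.re → s.re ≤ b → 1 ≤ |s.im| →
      ‖Complex.Gamma s * Complex.cos (Real.pi * s / 2)‖ ≤ C * ‖s‖ ^ (s.re - 1 / 2) := by
  set g : ℝ → ℝ := fun σ => Real.Gamma σ * Real.exp (σ + 1) / σ ^ (σ - 1 / 2)
  have hg : ContinuousOn g (Icc a b) := fun σ hσ => by
    have hσ0 : 0 < σ := ha.trans_le hσ.1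
    have hΓ : ContinuousAt Real.Gamma σ := (Real.differentiableAt_Gamma fun m =>
      ((neg_nonpos.2 m.cast_nonneg).trans_lt hσ0).ne').continuousAt
    exact ((hΓ.mul (by fun_prop)).div (continuousAt_id.rpow (by fun_prop) (Or.inl hσ0.ne'))
      (by positivity)).continuousWithinAt
  obtain ⟨C, hC⟩ := isCompact_Icc.exists_bound_of_continuousOn hg
  refine ⟨max C 1, by positivity, fun s hsa hsb him => ?_⟩
  have hs : 0 < s.re := ha.trans_le hsa
  have hs' : 0 < ‖s‖ := hs.trans_le (re_le_norm s)
  have hcos : ‖cos (π * s / 2)‖ ≤ Real.exp (π * |s.im| / 2) := by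
    refine (norm_cos_le_exp_abs_im _).trans_eq ?_
    simp [abs_div, abs_mul, abs_of_pos Real.pi_pos]
  calc ‖Gamma s * cos (π * s / 2)‖
      ≤ Real.Gamma s.re * (‖s‖ / s.re) ^ (s.re - 1 / 2) * Real.exp (s.re + 1 - π * |s.im| / 2) *
          Real.exp (π * |s.im| / 2) := by
        rw [norm_mul]
        gcongr
        exact norm_Gamma_le hs (abs_pos.1 (one_pos.trans_le him))
    _ = g s.re * ‖s‖ ^ (s.re - 1 / 2) := by
        rw [Real.div_rpow hs'.le hs.le, mul_assoc _ (Real.exp _), ← Real.exp_add, sub_add_cancel]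
        ring
    _ ≤ max C 1 * ‖s‖ ^ (s.re - 1 / 2) := by
        gcongr
        exact (le_abs_self _).trans ((hC s.re ⟨hsa, hsb⟩).trans (le_max_left _ _))

/-- for all `0 < a ≤ b` there is `C > 0` such that
`|Γ(s) cos(πs/2)| ≤ C |s|^{Re(s) − 1/2}` for all `s` with `a ≤ Re(s) ≤ b` and `|Im(s)| ≥ 1`. -/
theorem gamma_cos_bound (a b : ℝ) (ha : 0 < a) (hab : a ≤ b) :
    ∃ C : ℝ, 0 < C ∧ ∀ s : ℂ, a ≤ s.re → s.re ≤ b → 1 ≤ |s.im| →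
      ‖Complex.Gamma s * Complex.cos (Real.pi * s / 2)‖ ≤ C * ‖s‖ ^ (s.re - 1 / 2) :=
  gamma_cos_bound_general a b ha

end
end
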